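/- arXiv:2605.05406 — 6 statements merged into one kernel-verified Lean document; each statement's English description precedes it below -/
import Mathlib

section
/- Let a, b, c > 0 be real numbers with 3c² ≥ a² + b². Then S(a,b,c) = √(a⁴b⁴ + (a⁴ − a²b² + b⁴)c⁴ − a²b²(a² + b²)c²) ≤ (a² + b²)c² − a²b². (The proof rests on the identity ((a²+b²)c² − a²b²)² − Q(a,b,c) = a²b²c²(3c² − a² − b²) and the fact that the right-hand side is nonnegative under the hypothesis.) -/
/-- For `a, b, c > 0` with `3c² ≥ a² + b²`, one has
`S(a,b,c) = √(a⁴b⁴ + (a⁴ − a²b² + b⁴)c⁴ − a²b²(a² + b²)c²) ≤ (a² + b²)c² − a²b²`. -/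
theorem sqrt_radicand_le (a b c : ℝ) (ha : 0 < a) (hb : 0 < b) (hc : 0 < c)
    (h : a^2 + b^2 ≤ 3*c^2) :
    Real.sqrt (a^4*b^4 + (a^4 - a^2*b^2 + b^4)*c^4 - a^2*b^2*(a^2 + b^2)*c^2)
      ≤ (a^2 + b^2)*c^2 - a^2*b^2 := by
  have hR : 0 ≤ (a^2 + b^2)*c^2 - a^2*b^2 := by nlinarith [sq_nonneg (a^2 - b^2), sq_nonneg a, sq_nonneg b, sq_nonneg c]
  have h1 : a^4*b^4 + (a^4 - a^2*b^2 + b^4)*c^4 - a^2*b^2*(a^2 + b^2)*c^2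
      ≤ ((a^2 + b^2)*c^2 - a^2*b^2)^2 := by
    nlinarith [mul_pos (mul_pos ha hb) hc, sq_nonneg (a*b*c),
      mul_nonneg (mul_nonneg (sq_nonneg a) (sq_nonneg b)) (mul_nonneg (sq_nonneg c) (by linarith : (0:ℝ) ≤ 3*c^2 - (a^2+b^2)))]
  calc Real.sqrt (a^4*b^4 + (a^4 - a^2*b^2 + b^4)*c^4 - a^2*b^2*(a^2 + b^2)*c^2)
      ≤ Real.sqrt (((a^2 + b^2)*c^2 - a^2*b^2)^2) := Real.sqrt_le_sqrt h1
    _ = (a^2 + b^2)*c^2 - a^2*b^2 := Real.sqrt_sq hR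
end

section
/- For all real numbers a, b, c > 0 one has min{4b²c²/a², 4a²c²/b², 4a²b²/c², a² + b² + c², λ₊(a,b,c), λ₋(a,b,c)} = min{4b²c²/a², 4a²c²/b², 4a²b²/c², a² + b² + c²}. In particular the smallest element of the union of the spectra of Δ₁ on the k = 0 isotypic component (which is {4b²c²/a², 4a²c²/b², 4a²b²/c²}) and on the k = 1 isotypic component (which is {a²+b²+c², λ₊, λ₋}, each with multiplicity 2) equals min(4a²b²/c², 4a²c²/b², 4b²c²/a², a²+b²+c²). -/
/-- `S(a,b,c) = √(a⁴b⁴ + (a⁴ − a²b² + b⁴)c⁴ − a²b²(a² + b²)c²)`. -/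
noncomputable def Sgeom (a b c : ℝ) : ℝ :=
  Real.sqrt (a^4*b^4 + (a^4 - a^2*b^2 + b^4)*c^4 - a^2*b^2*(a^2 + b^2)*c^2)

/-- The larger coclosed eigenvalue `λ₊(a,b,c)` on the `k = 1` isotypic component. -/
noncomputable def lamPlus (a b c : ℝ) : ℝ :=
  (2*a^4*b^4 + (2*a^4 + a^2*b^2 + 2*b^4)*c^4 + (a^4*b^2 + a^2*b^4)*c^2) / (a^2*b^2*c^2)
    + 2 * Sgeom a b c * (a^2*b^2 + (a^2 + b^2)*c^2) / (a^2*b^2*c^2)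

/-- The smaller coclosed eigenvalue `λ₋(a,b,c)` on the `k = 1` isotypic component. -/
noncomputable def lamMinus (a b c : ℝ) : ℝ :=
  (2*a^4*b^4 + (2*a^4 + a^2*b^2 + 2*b^4)*c^4 + (a^4*b^2 + a^2*b^4)*c^2) / (a^2*b^2*c^2)
    - 2 * Sgeom a b c * (a^2*b^2 + (a^2 + b^2)*c^2) / (a^2*b^2*c^2)

/-- Key symmetric inequality: if `z` is the largest of `x,y,z > 0`, then
`4x²y² + 2√(Σx²y² − xyz·s)·(Σxy) ≤ 2Σx²y² + xyz·s`. -/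
lemma key_ineq (x y z : ℝ) (hx : 0 < x) (hy : 0 < y) (hz : 0 < z)
    (hxz : x ≤ z) (hyz : y ≤ z) :
    4*x^2*y^2 + 2 * Real.sqrt (x^2*y^2 + y^2*z^2 + z^2*x^2 - x*y*z*(x+y+z)) * (x*y + y*z + z*x)
      ≤ 2*(x^2*y^2 + y^2*z^2 + z^2*x^2) + x*y*z*(x+y+z) := by
  set S2 : ℝ := x^2*y^2 + y^2*z^2 + z^2*x^2 - x*y*z*(x+y+z) with hS2def
  set t : ℝ := Real.sqrt S2 with htdef
  set Q : ℝ := x*y + y*z + z*x with hQdef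
  set A : ℝ := 2*(x^2*y^2 + y^2*z^2 + z^2*x^2) + x*y*z*(x+y+z) - 4*x^2*y^2 with hAdef
  have hS2 : 0 ≤ S2 := by
    rw [hS2def]
    nlinarith [sq_nonneg (x*y - y*z), sq_nonneg (y*z - z*x), sq_nonneg (z*x - x*y)]
  have ht2 : t^2 = S2 := Real.sq_sqrt hS2
  have htn : 0 ≤ t := Real.sqrt_nonneg _
  have hQ : 0 < Q := by rw [hQdef]; positivity
  have hA : 0 < A := by
    rw [hAdef]
    nlinarith [mul_pos (mul_pos hx hy) hz, mul_pos hx hy, mul_pos hy hz,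
      mul_le_mul_of_nonneg_left (mul_le_mul hxz hyz hy.le hz.le) (mul_pos hx hy).le]
  have hG : 0 ≤ 9*z*(x+y+z)^2 - 16*z*(x^2+y^2) - 8*x*y*(x+y+z) := by
    nlinarith [mul_nonneg (mul_nonneg hz.le (sub_nonneg.2 hxz)) (sub_nonneg.2 hyz),
      mul_nonneg (mul_nonneg hx.le hz.le) (sub_nonneg.2 hxz),
      mul_nonneg (mul_nonneg hy.le hz.le) (sub_nonneg.2 hyz),
      mul_nonneg (mul_nonneg hx.le hy.le) (sub_nonneg.2 hxz),
      mul_nonneg (mul_nonneg hx.le hy.le) (sub_nonneg.2 hyz),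
      mul_pos (mul_pos hx hy) hz, mul_pos hz (mul_pos hz hz),
      mul_nonneg (mul_nonneg hz.le hz.le) (sub_nonneg.2 hxz),
      mul_nonneg (mul_nonneg hz.le hz.le) (sub_nonneg.2 hyz)]
  have h4 : (2*t*Q)^2 = 4*S2*Q^2 := by
    rw [show (2*t*Q)^2 = 4*t^2*Q^2 by ring, ht2]
  have hprod : 0 ≤ x^2*y^2*z * (9*z*(x+y+z)^2 - 16*z*(x^2+y^2) - 8*x*y*(x+y+z)) := by
    apply mul_nonneg (by positivity) hG
  have h3 : (2*t*Q)^2 ≤ A^2 := by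
    rw [h4, hAdef, hQdef, hS2def]
    nlinarith [hprod]
  have h5 : 2*t*Q ≤ A := by
    have h6 := Real.sqrt_le_sqrt h3
    rwa [Real.sqrt_sq (by positivity), Real.sqrt_sq hA.le] at h6
  rw [hAdef] at h5
  linarith

/-- `λ₋` dominates the minimum of the three `k = 0` eigenvalues. -/
lemma lamMinus_ge (a b c : ℝ) (ha : 0 < a) (hb : 0 < b) (hc : 0 < c) :
    min (min (4*b^2*c^2/a^2) (4*a^2*c^2/b^2)) (4*a^2*b^2/c^2) ≤ lamMinus a b c := by
  set x : ℝ := a^2 with hxd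
  set y : ℝ := b^2 with hyd
  set z : ℝ := c^2 with hzd
  have hx : 0 < x := by positivity
  have hy : 0 < y := by positivity
  have hz : 0 < z := by positivity
  have hD : 0 < x*y*z := by positivity
  have hSg : Sgeom a b c
      = Real.sqrt (x^2*y^2 + y^2*z^2 + z^2*x^2 - x*y*z*(x+y+z)) := by
    unfold Sgeom
    congr 1
    rw [hxd, hyd, hzd]; ring
  have hlam : lamMinus a b c
      = (2*(x^2*y^2 + y^2*z^2 + z^2*x^2) + x*y*z*(x+y+z)
          - 2 * Real.sqrt (x^2*y^2 + y^2*z^2 + z^2*x^2 - x*y*z*(x+y+z)) * (x*y + y*z + z*x))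
        / (x*y*z) := by
    unfold lamMinus
    rw [hSg]
    field_simp
    ring
  have bound : ∀ p q r : ℝ, 0 < p → 0 < q → 0 < r → p ≤ r → q ≤ r →
      p*q*r = x*y*z →
      p^2*q^2 + q^2*r^2 + r^2*p^2 - p*q*r*(p+q+r)
        = x^2*y^2 + y^2*z^2 + z^2*x^2 - x*y*z*(x+y+z) →
      p*q + q*r + r*p = x*y + y*z + z*x →
      p^2*q^2 + q^2*r^2 + r^2*p^2 = x^2*y^2 + y^2*z^2 + z^2*x^2 →
      4*p^2*q^2/(x*y*z) ≤ lamMinus a b c := by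
    intro p q r hp hq hr hpr hqr hprod hS2e hQe hsum
    have hk := key_ineq p q r hp hq hr hpr hqr
    rw [hS2e] at hk
    rw [hlam]
    apply (div_le_div_iff_of_pos_right hD).mpr
    have hQs : Real.sqrt (x^2*y^2 + y^2*z^2 + z^2*x^2 - x*y*z*(x+y+z)) * (p*q + q*r + r*p)
        = Real.sqrt (x^2*y^2 + y^2*z^2 + z^2*x^2 - x*y*z*(x+y+z)) * (x*y + y*z + z*x) := by
      rw [hQe]
    have hps : p*q*r*(p+q+r) = x*y*z*(x+y+z) := by linarith
    linarith [hk]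
  rcases le_total x y with hxy | hyx
  · rcases le_total y z with hyz | hzy
    · -- x ≤ y ≤ z : bound by 4*a^2*b^2/c^2 = 4xy/z
      refine le_trans (min_le_right _ _) ?_
      have h := bound x y z hx hy hz (hxy.trans hyz) hyz rfl rfl rfl rfl
      rwa [show 4*a^2*b^2/c^2 = 4*x^2*y^2/(x*y*z) by
        rw [hxd, hyd, hzd]; field_simp]
    · -- x ≤ y, z ≤ y : y max, bound by 4*a^2*c^2/b^2 = 4xz/y
      refine le_trans (le_trans (min_le_left _ _) (min_le_right _ _)) ?_
      have h := bound x z y hx hz hy hxy hzy (by ring) (by ring) (by ring) (by ring)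
      rwa [show 4*a^2*c^2/b^2 = 4*x^2*z^2/(x*y*z) by
        rw [hxd, hyd, hzd]; field_simp]
  · rcases le_total x z with hxz | hzx
    · -- y ≤ x ≤ z : z max, bound by 4*a^2*b^2/c^2
      refine le_trans (min_le_right _ _) ?_
      have h := bound x y z hx hy hz hxz (hyx.trans hxz) rfl rfl rfl rfl
      rwa [show 4*a^2*b^2/c^2 = 4*x^2*y^2/(x*y*z) by
        rw [hxd, hyd, hzd]; field_simp]
    · -- y ≤ x, z ≤ x : x max, bound by 4*b^2*c^2/a^2 = 4yz/x
      refine le_trans (le_trans (min_le_left _ _) (min_le_left _ _)) ?_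
      have h := bound y z x hy hz hx hyx hzx (by ring) (by ring) (by ring) (by ring)
      rwa [show 4*b^2*c^2/a^2 = 4*y^2*z^2/(x*y*z) by
        rw [hxd, hyd, hzd]; field_simp]

lemma lamMinus_le_lamPlus (a b c : ℝ) (ha : 0 < a) (hb : 0 < b) (hc : 0 < c) :
    lamMinus a b c ≤ lamPlus a b c := by
  unfold lamMinus lamPlus
  have h : 0 ≤ 2 * Sgeom a b c * (a^2*b^2 + (a^2 + b^2)*c^2) / (a^2*b^2*c^2) := by
    unfold Sgeom
    positivity
  linarith

/-- For all `a, b, c > 0`,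
`min{4b²c²/a², 4a²c²/b², 4a²b²/c², a² + b² + c², λ₊, λ₋}
  = min{4b²c²/a², 4a²c²/b², 4a²b²/c², a² + b² + c²}`. -/
theorem first_eigenvalue_k0_k1 (a b c : ℝ) (ha : 0 < a) (hb : 0 < b) (hc : 0 < c) :
    min (min (min (min (min (4*b^2*c^2/a^2) (4*a^2*c^2/b^2)) (4*a^2*b^2/c^2))
        (a^2 + b^2 + c^2)) (lamPlus a b c)) (lamMinus a b c)
    = min (min (min (4*b^2*c^2/a^2) (4*a^2*c^2/b^2)) (4*a^2*b^2/c^2)) (a^2 + b^2 + c^2) := by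
  have h1 : min (min (min (4*b^2*c^2/a^2) (4*a^2*c^2/b^2)) (4*a^2*b^2/c^2)) (a^2+b^2+c^2)
      ≤ lamMinus a b c :=
    le_trans (min_le_left _ _) (lamMinus_ge a b c ha hb hc)
  have h2 : min (min (min (4*b^2*c^2/a^2) (4*a^2*c^2/b^2)) (4*a^2*b^2/c^2)) (a^2+b^2+c^2)
      ≤ lamPlus a b c :=
    le_trans h1 (lamMinus_le_lamPlus a b c ha hb hc)
  rw [min_eq_left h2, min_eq_left h1]
end

section
/- Let a, b > 0 be real numbers, let k ≥ 2 be an integer, let 1 ≤ j ≤ k−1 and ε ∈ {+1,−1}. Set R = √(a⁴(k−2j)² + a²b²(2k + 4j(k−j)) + b⁴), ν = a²(k−2j)² + b²((4j+2)k − 4j²), α = [2(k−2j)²a² + (2k + 4j(k−j))b² − ε·2(k−2j)·R] / (4(k−j+1)b²), β = (−a²(k−2j) + b² + ε·R)/(ab), γ = k−j, and μ = ν + 2b⁴/a² + ε·2(b²/a²)·R. Then the following three scalar identities hold: (1) α·((k−2j)²a² + 4j(k−j+1)b²) + 2j·β·(b³/a) = α·μ; (2) 4(b³/a)·(α·(k−j+1)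 + γ·(j+1)) + β·(ν + 4b⁴/a²) = β·μ; (3) γ·((k−2j)²a² + 4(j+1)(k−j)b²) + 2(k−j)·β·(b³/a) = γ·μ. -/
/-!
Clearing the denominators `a`, `b` and `k - j + 1`, the third identity is a polynomial identity,
while the first two become multiples of `(ε R)² - D`, where `D` is the radicand of `R`.
They therefore hold for either square root `±√D`, and `√D` is real because
`D = (a²(k - 2j) + b²)² + 4a²b² j (k - j + 1)` is nonnegative.
-/

/-- The radicand of `R`, with `k, j` relaxed to real numbers `c, d`. -/
def bergerDisc (a b c d : ℝ) : ℝ :=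
  a^4*(c - 2*d)^2 + a^2*b^2*(2*c + 4*d*(c - d)) + b^4

theorem bergerDisc_eq_sq_add (a b c d : ℝ) :
    bergerDisc a b c d = (a^2*(c - 2*d) + b^2)^2 + 4*a^2*b^2*(d*(c - d + 1)) := by
  unfold bergerDisc
  ring

theorem bergerDisc_nonneg (a b : ℝ) {c d : ℝ} (hd : 0 ≤ d) (hdc : d ≤ c + 1) :
    0 ≤ bergerDisc a b c d := by
  rw [bergerDisc_eq_sq_add]
  have : 0 ≤ d*(c - d + 1) := mul_nonneg hd (by linarith)
  positivity

theorem eigenvector_identities_of_sq_eq {a b c d ε R : ℝ} (ha : a ≠ 0) (hb : b ≠ 0)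
    (hcd : c - d + 1 ≠ 0) (hε : ε^2 = 1) (hR : R^2 = bergerDisc a b c d) :
    let ν : ℝ := a^2*(c - 2*d)^2 + b^2*((4*d + 2)*c - 4*d^2)
    let α : ℝ := (2*(c - 2*d)^2*a^2 + (2*c + 4*d*(c - d))*b^2
      - ε*2*(c - 2*d)*R) / (4*(c - d + 1)*b^2)
    let β : ℝ := (-a^2*(c - 2*d) + b^2 + ε*R) / (a*b)
    let γ : ℝ := c - d
    let μ : ℝ := ν + 2*b^4/a^2 + ε*2*(b^2/a^2)*R
    α*((c - 2*d)^2*a^2 + 4*d*(c - d + 1)*b^2) + 2*d*β*(b^3/a) = α*μ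
    ∧ 4*(b^3/a)*(α*(c - d + 1) + γ*(d + 1)) + β*(ν + 4*b^4/a^2) = β*μ
    ∧ γ*((c - 2*d)^2*a^2 + 4*(d + 1)*(c - d)*b^2) + 2*(c - d)*β*(b^3/a) = γ*μ := by
  intro ν α β γ μ
  have hεR : (ε*R)^2 = bergerDisc a b c d := by rw [mul_pow, hε, one_mul, hR]
  unfold bergerDisc at hεR
  refine ⟨?_, ?_, ?_⟩
  · simp only [ν, α, β, μ]
    field_simp
    linear_combination 4*b^2*(c - 2*d) * hεR
  · simp only [ν, α, β, γ, μ]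
    field_simp
    linear_combination (-2)*b^2 * hεR
  · simp only [ν, β, γ, μ]
    field_simp
    ring

theorem eigenvector_coefficient_identities_general (a b : ℝ) (ha : 0 < a) (hb : 0 < b)
    (k j : ℕ) (hj2 : j ≤ k - 1)
    (ε : ℝ) (hε : ε = 1 ∨ ε = -1) :
    let R : ℝ := Real.sqrt (a^4*((k:ℝ) - 2*(j:ℝ))^2
      + a^2*b^2*(2*(k:ℝ) + 4*(j:ℝ)*((k:ℝ) - (j:ℝ))) + b^4)
    let ν : ℝ := a^2*((k:ℝ) - 2*(j:ℝ))^2 + b^2*((4*(j:ℝ) + 2)*(k:ℝ) - 4*(j:ℝ)^2)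
    let α : ℝ := (2*((k:ℝ) - 2*(j:ℝ))^2*a^2 + (2*(k:ℝ) + 4*(j:ℝ)*((k:ℝ) - (j:ℝ)))*b^2
      - ε*2*((k:ℝ) - 2*(j:ℝ))*R) / (4*((k:ℝ) - (j:ℝ) + 1)*b^2)
    let β : ℝ := (-a^2*((k:ℝ) - 2*(j:ℝ)) + b^2 + ε*R) / (a*b)
    let γ : ℝ := (k:ℝ) - (j:ℝ)
    let μ : ℝ := ν + 2*b^4/a^2 + ε*2*(b^2/a^2)*R
    α*(((k:ℝ) - 2*(j:ℝ))^2*a^2 + 4*(j:ℝ)*((k:ℝ) - (j:ℝ) + 1)*b^2) + 2*(j:ℝ)*β*(b^3/a) = α*μ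
    ∧ 4*(b^3/a)*(α*((k:ℝ) - (j:ℝ) + 1) + γ*((j:ℝ) + 1)) + β*(ν + 4*b^4/a^2) = β*μ
    ∧ γ*(((k:ℝ) - 2*(j:ℝ))^2*a^2 + 4*((j:ℝ) + 1)*((k:ℝ) - (j:ℝ))*b^2)
        + 2*((k:ℝ) - (j:ℝ))*β*(b^3/a) = γ*μ := by
  have hjk : (j:ℝ) ≤ k := by exact_mod_cast hj2.trans (Nat.sub_le k 1)
  have hε2 : ε^2 = 1 := by rcases hε with rfl | rfl <;> norm_num
  have hR : Real.sqrt (bergerDisc a b k j) ^ 2 = bergerDisc a b k j :=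
    Real.sq_sqrt (bergerDisc_nonneg a b (Nat.cast_nonneg j) (by linarith))
  exact eigenvector_identities_of_sq_eq ha.ne' hb.ne' (by linarith) hε2 hR

/-- the three scalar identities verifying that `(α, β, γ)` is an eigenvector
of the Hodge-Laplacian block with eigenvalue `μ`. -/
theorem eigenvector_coefficient_identities (a b : ℝ) (ha : 0 < a) (hb : 0 < b)
    (k j : ℕ) (hk : 2 ≤ k) (hj1 : 1 ≤ j) (hj2 : j ≤ k - 1)
    (ε : ℝ) (hε : ε = 1 ∨ ε = -1) :
    let R : ℝ := Real.sqrt (a^4*((k:ℝ) - 2*(j:ℝ))^2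
      + a^2*b^2*(2*(k:ℝ) + 4*(j:ℝ)*((k:ℝ) - (j:ℝ))) + b^4)
    let ν : ℝ := a^2*((k:ℝ) - 2*(j:ℝ))^2 + b^2*((4*(j:ℝ) + 2)*(k:ℝ) - 4*(j:ℝ)^2)
    let α : ℝ := (2*((k:ℝ) - 2*(j:ℝ))^2*a^2 + (2*(k:ℝ) + 4*(j:ℝ)*((k:ℝ) - (j:ℝ)))*b^2
      - ε*2*((k:ℝ) - 2*(j:ℝ))*R) / (4*((k:ℝ) - (j:ℝ) + 1)*b^2)
    let β : ℝ := (-a^2*((k:ℝ) - 2*(j:ℝ)) + b^2 + ε*R) / (a*b)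
    let γ : ℝ := (k:ℝ) - (j:ℝ)
    let μ : ℝ := ν + 2*b^4/a^2 + ε*2*(b^2/a^2)*R
    α*(((k:ℝ) - 2*(j:ℝ))^2*a^2 + 4*(j:ℝ)*((k:ℝ) - (j:ℝ) + 1)*b^2) + 2*(j:ℝ)*β*(b^3/a) = α*μ
    ∧ 4*(b^3/a)*(α*((k:ℝ) - (j:ℝ) + 1) + γ*((j:ℝ) + 1)) + β*(ν + 4*b^4/a^2) = β*μ
    ∧ γ*(((k:ℝ) - 2*(j:ℝ))^2*a^2 + 4*((j:ℝ) + 1)*((k:ℝ) - (j:ℝ))*b^2)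
        + 2*((k:ℝ) - (j:ℝ))*β*(b^3/a) = γ*μ :=
  eigenvector_coefficient_identities_general a b ha hb k j hj2 ε hε
end

section
/- Let x, y, z, x', y', z' > 0 be real numbers. Assume that x + y + z ≤ 4yz/x, x + y + z ≤ 4xz/y, x + y + z ≤ 4xy/z, and likewise x' + y' + z' ≤ 4y'z'/x', x' + y' + z' ≤ 4x'z'/y', x' + y' + z' ≤ 4x'y'/z' (so that on both sides the first eigenvalue min(4yz/x, 4xz/y, 4xy/z, x+y+z) equals x + y + z). If xyz = x'y'z', x + y + z = x' + y' + z', and 8(x+y+z) − 2(xy+yz+zx)²/(xyz) = 8(x'+y'+z') − 2(x'y'+y'z'+z'x')²/(x'y'z'), then the multiset {x, y, z} equals the multiset {x', y', z'}, i.e. (x', y', z') is a permutation of (x, y, z). -/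
open Polynomial in
lemma cubic_expand (a b c : ℝ) :
    (X - C a) * (X - C b) * (X - C c) =
      X^3 - C (a+b+c)*X^2 + C (a*b+b*c+c*a)*X - C (a*b*c) := by
  simp only [C_add, C_mul]
  ring

/-- if on both sides the first eigenvalue
`min(4yz/x, 4xz/y, 4xy/z, x+y+z)` equals `x + y + z`, and the two metrics share the
volume (`σ₃`), the first eigenvalue (`σ₁`) and the scalar curvature
`8σ₁ − 2σ₂²/σ₃`, then `{x, y, z} = {x', y', z'}` as multisets. -/
theorem spectral_determination_exact_case
    (x y z x' y' z' : ℝ)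
    (hx : 0 < x) (hy : 0 < y) (hz : 0 < z)
    (hx' : 0 < x') (hy' : 0 < y') (hz' : 0 < z')
    (h1 : x + y + z ≤ 4*y*z/x) (h2 : x + y + z ≤ 4*x*z/y) (h3 : x + y + z ≤ 4*x*y/z)
    (h1' : x' + y' + z' ≤ 4*y'*z'/x') (h2' : x' + y' + z' ≤ 4*x'*z'/y')
    (h3' : x' + y' + z' ≤ 4*x'*y'/z')
    (hvol : x*y*z = x'*y'*z')
    (hlam : x + y + z = x' + y' + z')
    (hscal : 8*(x + y + z) - 2*(x*y + y*z + z*x)^2/(x*y*z)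
      = 8*(x' + y' + z') - 2*(x'*y' + y'*z' + z'*x')^2/(x'*y'*z')) :
    ({x, y, z} : Multiset ℝ) = ({x', y', z'} : Multiset ℝ) := by
  have hxyz : (0:ℝ) < x*y*z := by positivity
  have hσ2 : x*y + y*z + z*x = x'*y' + y'*z' + z'*x' := by
    rw [hlam, hvol] at hscal
    have hne : x'*y'*z' ≠ 0 := by rw [← hvol]; exact ne_of_gt hxyz
    have h2pos : (0:ℝ) < x*y + y*z + z*x := by positivity
    have h2pos' : (0:ℝ) < x'*y' + y'*z' + z'*x' := by positivity
    field_simp at hscal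
    nlinarith [sq_nonneg (x*y + y*z + z*x - (x'*y' + y'*z' + z'*x')), sq_nonneg (x*y + y*z + z*x + (x'*y' + y'*z' + z'*x'))]
  -- polynomial equality
  open Polynomial in
  have hpoly : ((({x, y, z} : Multiset ℝ)).map (fun a => X - C a)).prod
      = ((({x', y', z'} : Multiset ℝ)).map (fun a => X - C a)).prod := by
    simp only [Multiset.insert_eq_cons, Multiset.map_cons, Multiset.map_singleton,
      Multiset.prod_cons, Multiset.prod_singleton]
    rw [← mul_assoc, ← mul_assoc, cubic_expand, cubic_expand, hlam, hσ2, hvol]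
  have := congrArg Polynomial.roots hpoly
  rwa [Polynomial.roots_multiset_prod_X_sub_C, Polynomial.roots_multiset_prod_X_sub_C] at this
end

section
/- Let x, y, z, x', y', z' > 0 be real numbers with x ≥ y, x ≥ z, x' ≥ y', x' ≥ z'. If xyz = x'y'z', 4yz/x = 4y'z'/x', and 8(x+y+z) − 2(xy+yz+zx)²/(xyz) = 8(x'+y'+z') − 2(x'y'+y'z'+z'x')²/(x'y'z'), then x = x', {y, z} = {y', z'} as multisets; in particular (x', y', z') is a permutation of (x, y, z). -/
/-!
The volume `xyz` and the eigenvalue `4yz/x` together determine `x` and `yz`: their product and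
quotient give `(yz)²` and `x²`. With `x` and `p = yz` fixed, the scalar curvature is the concave
quadratic `s ↦ 8(x + s) - 2(xs + p)²/(xp)` in `s = y + z`, which is strictly decreasing for
`xs > p`; this holds as soon as `y ≤ x`. So `y + z` is determined too, and a pair of numbers is
determined by its sum and product.
-/

theorem Multiset.pair_eq_pair_of_add_eq_of_mul_eq {R : Type*} [CommRing R] [NoZeroDivisors R]
    {a b c d : R} (hsum : a + b = c + d) (hprod : a * b = c * d) :
    ({a, b} : Multiset R) = {c, d} := by
  have : (a - c) * (a - d) = 0 := by linear_combination a * hsum - hprod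
  rcases mul_eq_zero.mp this with hac | had
  · obtain rfl : a = c := sub_eq_zero.mp hac
    obtain rfl : b = d := add_left_cancel hsum
    rfl
  · obtain rfl : a = d := sub_eq_zero.mp had
    obtain rfl : b = c := by linear_combination hsum
    exact Multiset.pair_comm _ _

theorem eq_and_eq_of_mul_eq_mul_of_div_eq_div {K : Type*} [Field K] [LinearOrder K]
    [IsStrictOrderedRing K] {p p' x x' : K} (hp : 0 < p) (hp' : 0 < p') (hx : 0 < x)
    (hx' : 0 < x') (hmul : p * x = p' * x') (hdiv : p / x = p' / x') : p = p' ∧ x = x' := by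
  have hcross : p * x' = p' * x := (div_eq_div_iff hx.ne' hx'.ne').mp hdiv
  have hsq : p ^ 2 * (x * x') = p' ^ 2 * (x * x') := by
    linear_combination (p * x') * hmul + (p' * x') * hcross
  have hpp' : p = p' :=
    (pow_left_inj₀ hp.le hp'.le two_ne_zero).mp (mul_right_cancel₀ (mul_pos hx hx').ne' hsq)
  subst hpp'
  exact ⟨rfl, mul_left_cancel₀ hp.ne' hmul⟩

theorem injOn_scalarCurvature {x p : ℝ} (hx : 0 < x) (hp : 0 < p) :
    Set.InjOn (fun s => 8*(x + s) - 2*(x*s + p)^2/(x*p)) (Set.Ioi (p / x)) := by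
  intro s hs s' hs' h
  have hsum : 2 * p < x * (s + s') := by
    rw [Set.mem_Ioi, div_lt_iff₀' hx] at hs hs'
    linarith
  have hfactor : x * (s - s') * (x * (s + s') - 2 * p) = 0 := by
    field_simp at h
    linear_combination (-1/2 : ℝ) * h
  have hx_mul : x * (s - s') = 0 := (mul_eq_zero.mp hfactor).resolve_right (by linarith)
  exact sub_eq_zero.mp ((mul_eq_zero.mp hx_mul).resolve_left hx.ne')

theorem mul_div_lt_add {x y z : ℝ} (hx : 0 < x) (hy : 0 < y) (hz : 0 < z) (hyx : y ≤ x) :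
    y * z / x < y + z := by
  rw [div_lt_iff₀' hx]
  nlinarith [mul_le_mul_of_nonneg_right hyx hz.le, mul_pos hx hy]

theorem add_eq_add_of_scalarCurvature_eq {x y z y' z' : ℝ} (hx : 0 < x) (hy : 0 < y)
    (hz : 0 < z) (hy' : 0 < y') (hz' : 0 < z') (hyx : y ≤ x) (hy'x : y' ≤ x)
    (hprod : y * z = y' * z')
    (hscal : 8*(x + y + z) - 2*(x*y + y*z + z*x)^2/(x*y*z)
      = 8*(x + y' + z') - 2*(x*y' + y'*z' + z'*x)^2/(x*y'*z')) :
    y + z = y' + z' := by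
  have hregroup (b c : ℝ) : 8*(x + b + c) - 2*(x*b + b*c + c*x)^2/(x*b*c)
      = 8*(x + (b + c)) - 2*(x*(b + c) + b*c)^2/(x*(b*c)) := by ring
  rw [hregroup, hregroup, ← hprod] at hscal
  refine injOn_scalarCurvature hx (mul_pos hy hz) (mul_div_lt_add hx hy hz hyx) ?_ hscal
  rw [Set.mem_Ioi, hprod]
  exact mul_div_lt_add hx hy' hz' hy'x

theorem spectral_determination_coclosed_case_general
    (x y z x' y' z' : ℝ)
    (hx : 0 < x) (hy : 0 < y) (hz : 0 < z)
    (hx' : 0 < x') (hy' : 0 < y') (hz' : 0 < z')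
    (hxy : y ≤ x) (hxy' : y' ≤ x')
    (hvol : x*y*z = x'*y'*z')
    (hlam : 4*y*z/x = 4*y'*z'/x')
    (hscal : 8*(x + y + z) - 2*(x*y + y*z + z*x)^2/(x*y*z)
      = 8*(x' + y' + z') - 2*(x'*y' + y'*z' + z'*x')^2/(x'*y'*z')) :
    x = x' ∧ ({y, z} : Multiset ℝ) = ({y', z'} : Multiset ℝ) := by
  obtain ⟨hprod, rfl⟩ := eq_and_eq_of_mul_eq_mul_of_div_eq_div (mul_pos hy hz) (mul_pos hy' hz')
    hx hx' (by linear_combination hvol) (by linear_combination hlam / 4)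
  have hsum := add_eq_add_of_scalarCurvature_eq hx hy hz hy' hz' hxy hxy' hprod hscal
  exact ⟨rfl, Multiset.pair_eq_pair_of_add_eq_of_mul_eq hsum hprod⟩

/-- if `x` (resp. `x'`) is maximal, and the two metrics share the volume
(`σ₃`), the smallest coclosed eigenvalue `4yz/x` and the scalar curvature
`8σ₁ − 2σ₂²/σ₃`, then `x = x'` and `{y, z} = {y', z'}` as multisets; in particular
`(x', y', z')` is a permutation of `(x, y, z)`. -/
theorem spectral_determination_coclosed_case
    (x y z x' y' z' : ℝ)
    (hx : 0 < x) (hy : 0 < y) (hz : 0 < z)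
    (hx' : 0 < x') (hy' : 0 < y') (hz' : 0 < z')
    (hxy : y ≤ x) (hxz : z ≤ x) (hxy' : y' ≤ x') (hxz' : z' ≤ x')
    (hvol : x*y*z = x'*y'*z')
    (hlam : 4*y*z/x = 4*y'*z'/x')
    (hscal : 8*(x + y + z) - 2*(x*y + y*z + z*x)^2/(x*y*z)
      = 8*(x' + y' + z') - 2*(x'*y' + y'*z' + z'*x')^2/(x'*y'*z')) :
    x = x' ∧ ({y, z} : Multiset ℝ) = ({y', z'} : Multiset ℝ) :=
  spectral_determination_coclosed_case_general x y z x' y' z' hx hy hz hx' hy' hz' hxy hxy' hvol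
    hlam hscal
end

section
/- Let a, b, c > 0 and define r₁₂ = 3a²b²/c² − a²c²/b² − b²c²/a² − 2a² − 2b² + 2c², r₁₃ = −a²b²/c² + 3a²c²/b² − b²c²/a² − 2a² + 2b² − 2c², r₂₃ = −a²b²/c² − a²c²/b² + 3b²c²/a² + 2a² − 2b² − 2c². Let L₁₂, L₁₃, L₂₃ be the real 3×3 matrices defined by L_{ij}·e_k = δ_{ik}·e_j − δ_{jk}·e_i on the standard basis e₁, e₂, e₃. Then r₁₂·L₁₂² + r₁₃·L₁₃² + r₂₃·L₂₃² = 2·diag(−a²b²/c² − a²c²/b² + b²c²/a² + 2a², −a²b²/c² − b²c²/a² + a²c²/b² + 2b², −b²c²/a² − a²c²/b² + a²b²/c² + 2c²). (This computes the Weitzenböck curvature operator 2q(R) of the metric g_{(a,b,c)} acting on the dual coframe {X₁*, X₂*, X₃*}; the diagonal entries are the eigenvalues of the Ricci operator.) -/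
set_option maxHeartbeats 2000000 in
/-- with the curvature-operator eigenvalues `r₁₂, r₁₃, r₂₃` and the
matrices `L_{ij}` defined by `L_{ij}·e_k = δ_{ik}·e_j − δ_{jk}·e_i`, one has
`r₁₂·L₁₂² + r₁₃·L₁₃² + r₂₃·L₂₃² = 2·diag(−a²b²/c² − a²c²/b² + b²c²/a² + 2a²,
−a²b²/c² − b²c²/a² + a²c²/b² + 2b², −b²c²/a² − a²c²/b² + a²b²/c² + 2c²)`,
i.e. the Weitzenböck curvature operator `2q(R)` acting on the dual coframe. -/
theorem weitzenboeck_curvature_on_coframe (a b c : ℝ)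
    (ha : 0 < a) (hb : 0 < b) (hc : 0 < c) :
    let r₁₂ : ℝ := 3*a^2*b^2/c^2 - a^2*c^2/b^2 - b^2*c^2/a^2 - 2*a^2 - 2*b^2 + 2*c^2
    let r₁₃ : ℝ := -(a^2*b^2/c^2) + 3*a^2*c^2/b^2 - b^2*c^2/a^2 - 2*a^2 + 2*b^2 - 2*c^2
    let r₂₃ : ℝ := -(a^2*b^2/c^2) - a^2*c^2/b^2 + 3*b^2*c^2/a^2 + 2*a^2 - 2*b^2 - 2*c^2
    let L₁₂ : Matrix (Fin 3) (Fin 3) ℝ := !![0, -1, 0; 1, 0, 0; 0, 0, 0]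
    let L₁₃ : Matrix (Fin 3) (Fin 3) ℝ := !![0, 0, -1; 0, 0, 0; 1, 0, 0]
    let L₂₃ : Matrix (Fin 3) (Fin 3) ℝ := !![0, 0, 0; 0, 0, -1; 0, 1, 0]
    r₁₂ • L₁₂^2 + r₁₃ • L₁₃^2 + r₂₃ • L₂₃^2
      = (2 : ℝ) • Matrix.diagonal
          ![-(a^2*b^2/c^2) - a^2*c^2/b^2 + b^2*c^2/a^2 + 2*a^2,
            -(a^2*b^2/c^2) - b^2*c^2/a^2 + a^2*c^2/b^2 + 2*b^2,
            -(b^2*c^2/a^2) - a^2*c^2/b^2 + a^2*b^2/c^2 + 2*c^2] := by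
  intro r₁₂ r₁₃ r₂₃ L₁₂ L₁₃ L₂₃
  ext i j
  fin_cases i <;> fin_cases j <;>
    simp [r₁₂, r₁₃, r₂₃, L₁₂, L₁₃, L₂₃, pow_two, Matrix.mul_apply, Fin.sum_univ_three,
      Matrix.diagonal, Matrix.vecHead, Matrix.vecTail] <;> ring
end
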